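/- Let μ ∈ ℝ, σ² > 0, τ² > 0, and set k = σ²/(σ² + τ²). Let ν be the Gaussian measure on ℝ with mean μ and variance σ² + τ². Then the mixture measure obtained by sampling y from ν and then sampling from the Gaussian with mean μ + k·(y − μ) and variance (1 − k)·σ² equals the Gaussian with mean μ and variance σ²; that is, ν.bind (fun y ↦ Gaussian(μ + k(y − μ), (1 − k)σ²)) = Gaussian(μ, σ²). -/

import Mathlib

open MeasureTheory ProbabilityTheory Real
open scoped NNReal ENNReal

/-- Pointwise factorization swap for the joint Gaussian density. -/
lemma gaussian_pdf_swap (μ x y : ℝ) (v w V s : ℝ≥0) (hv : 0 < (v : ℝ)) (hw : 0 < (w : ℝ))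
    (hV : (V : ℝ) = (v : ℝ) + w) (hs : (s : ℝ) = (v : ℝ) * w / ((v : ℝ) + w))
    (k : ℝ) (hk : k = (v : ℝ) / ((v : ℝ) + w)) :
    gaussianPDFReal (μ + k * (y - μ)) s x * gaussianPDFReal μ V y =
      gaussianPDFReal μ v x * gaussianPDFReal x w y := by
  have hvw : (0:ℝ) < (v : ℝ) + w := by linarith
  simp only [gaussianPDFReal]
  have h1 : (√(2 * π * (s : ℝ)))⁻¹ * (√(2 * π * (V : ℝ)))⁻¹ =
      (√(2 * π * (v : ℝ)))⁻¹ * (√(2 * π * (w : ℝ)))⁻¹ := by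
    rw [← mul_inv, ← mul_inv, ← Real.sqrt_mul (by positivity), ← Real.sqrt_mul (by positivity)]
    congr 1
    rw [hs, hV]
    field_simp
  have h2 : rexp (-(x - (μ + k * (y - μ))) ^ 2 / (2 * (s : ℝ))) *
      rexp (-(y - μ) ^ 2 / (2 * (V : ℝ))) =
      rexp (-(x - μ) ^ 2 / (2 * (v : ℝ))) * rexp (-(y - x) ^ 2 / (2 * (w : ℝ))) := by
    rw [← Real.exp_add, ← Real.exp_add]
    congr 1
    rw [hs, hV, hk]
    field_simp
    ring
  calc (√(2 * π * (s : ℝ)))⁻¹ * rexp (-(x - (μ + k * (y - μ))) ^ 2 / (2 * (s : ℝ))) *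
        ((√(2 * π * (V : ℝ)))⁻¹ * rexp (-(y - μ) ^ 2 / (2 * (V : ℝ))))
      = ((√(2 * π * (s : ℝ)))⁻¹ * (√(2 * π * (V : ℝ)))⁻¹) *
        (rexp (-(x - (μ + k * (y - μ))) ^ 2 / (2 * (s : ℝ))) *
          rexp (-(y - μ) ^ 2 / (2 * (V : ℝ)))) := by ring
    _ = ((√(2 * π * (v : ℝ)))⁻¹ * (√(2 * π * (w : ℝ)))⁻¹) *
        (rexp (-(x - μ) ^ 2 / (2 * (v : ℝ))) * rexp (-(y - x) ^ 2 / (2 * (w : ℝ)))) := by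
        rw [h1, h2]
    _ = (√(2 * π * (v : ℝ)))⁻¹ * rexp (-(x - μ) ^ 2 / (2 * (v : ℝ))) *
        ((√(2 * π * (w : ℝ)))⁻¹ * rexp (-(y - x) ^ 2 / (2 * (w : ℝ)))) := by ring

/-- One-dimensional Gaussian instance of Infoprop consistency: sampling `y` from
`N(μ, σ² + τ²)` and then sampling from `N(μ + k(y − μ), (1 − k)σ²)` with
`k = σ²/(σ² + τ²)` yields exactly `N(μ, σ²)`. -/
theorem stmt_7 (μ : ℝ) (v w : ℝ≥0) (hv : 0 < v) (hw : 0 < w)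
    (k : ℝ≥0) (hk : k = v / (v + w))
    (ν : Measure ℝ) (hν : ν = gaussianReal μ (v + w)) :
    ν.bind (fun y => gaussianReal (μ + (k : ℝ) * (y - μ)) ((1 - k) * v)) =
      gaussianReal μ v := by
  subst hν
  have hvR : (0:ℝ) < (v : ℝ) := hv
  have hwR : (0:ℝ) < (w : ℝ) := hw
  have hvwR : (0:ℝ) < (v : ℝ) + w := by linarith
  have hVne : v + w ≠ 0 := by positivity
  have hkcoe : (k : ℝ) = (v : ℝ) / ((v : ℝ) + w) := by
    rw [hk, NNReal.coe_div, NNReal.coe_add]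
  have hk1 : k ≤ 1 := by
    rw [← NNReal.coe_le_coe, hkcoe, NNReal.coe_one]
    rw [div_le_one hvwR]
    linarith
  have hscoe : (((1 - k) * v : ℝ≥0) : ℝ) = (v : ℝ) * w / ((v : ℝ) + w) := by
    rw [NNReal.coe_mul, NNReal.coe_sub hk1, NNReal.coe_one, hkcoe]
    field_simp
    ring
  have hsR : (0:ℝ) < (((1 - k) * v : ℝ≥0) : ℝ) := by rw [hscoe]; positivity
  have hsne : (1 - k) * v ≠ 0 := by
    intro h
    rw [h] at hsR
    simp at hsR
  -- joint measurability of the conditional density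
  have hjm : Measurable (fun p : ℝ × ℝ =>
      gaussianPDF (μ + (k : ℝ) * (p.1 - μ)) ((1 - k) * v) p.2) := by
    simp only [gaussianPDF_def, gaussianPDFReal]
    refine Measurable.ennreal_ofReal (Measurable.const_mul ?_ _)
    refine Real.measurable_exp.comp (Measurable.div_const (Measurable.neg ?_) _)
    refine Measurable.pow_const ?_ _
    exact measurable_snd.sub (((measurable_fst.sub measurable_const).const_mul _).const_add μ)
  -- measurability of the kernel
  have hκ : Measurable (fun y => gaussianReal (μ + (k : ℝ) * (y - μ)) ((1 - k) * v)) := by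
    refine Measure.measurable_of_measurable_coe _ fun A hA => ?_
    have hrw : (fun y => gaussianReal (μ + (k : ℝ) * (y - μ)) ((1 - k) * v) A)
        = fun y => ∫⁻ x, (Prod.snd ⁻¹' A).indicator
            (fun p : ℝ × ℝ => gaussianPDF (μ + (k : ℝ) * (p.1 - μ)) ((1 - k) * v) p.2)
            (y, x) := by
      funext y
      rw [gaussianReal_apply _ hsne A, ← lintegral_indicator hA]
      exact lintegral_congr fun x => by by_cases hx : x ∈ A <;> simp [Set.indicator_apply, hx]
    rw [hrw]
    exact (hjm.indicator (measurable_snd hA)).lintegral_prod_right'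
  ext A hA
  rw [Measure.bind_apply hA hκ.aemeasurable]
  rw [gaussianReal_of_var_ne_zero μ hVne]
  have hg : Measurable (fun y : ℝ => gaussianReal (μ + (k : ℝ) * (y - μ)) ((1 - k) * v) A) :=
    (Measure.measurable_coe hA).comp hκ
  rw [lintegral_withDensity_eq_lintegral_mul _ (measurable_gaussianPDF μ (v + w)) hg]
  simp only [Pi.mul_apply]
  have hstep : ∀ y : ℝ, gaussianPDF μ (v + w) y *
      gaussianReal (μ + (k : ℝ) * (y - μ)) ((1 - k) * v) A =
      ∫⁻ x, A.indicator (fun x =>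
        gaussianPDF μ (v + w) y * gaussianPDF (μ + (k : ℝ) * (y - μ)) ((1 - k) * v) x) x := by
    intro y
    rw [gaussianReal_apply _ hsne A, ← lintegral_indicator hA, ← lintegral_const_mul _
      ((measurable_gaussianPDF _ _).indicator hA)]
    exact lintegral_congr fun x => by by_cases hx : x ∈ A <;> simp [Set.indicator_apply, hx]
  simp_rw [hstep]
  rw [lintegral_lintegral_swap]
  · have hinner : ∀ x : ℝ, (∫⁻ y, A.indicator (fun x =>
        gaussianPDF μ (v + w) y * gaussianPDF (μ + (k : ℝ) * (y - μ)) ((1 - k) * v) x) x) =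
        A.indicator (gaussianPDF μ v) x := by
      intro x
      by_cases hx : x ∈ A
      · simp only [Set.indicator_of_mem hx]
        have hpt : ∀ y : ℝ, gaussianPDF μ (v + w) y *
            gaussianPDF (μ + (k : ℝ) * (y - μ)) ((1 - k) * v) x =
            ENNReal.ofReal (gaussianPDFReal μ v x * gaussianPDFReal x w y) := by
          intro y
          rw [gaussianPDF_def, gaussianPDF_def, ← ENNReal.ofReal_mul (gaussianPDFReal_nonneg _ _ _),
            mul_comm (gaussianPDFReal μ (v + w) y)]
          congr 1
          exact gaussian_pdf_swap μ x y v w (v + w) ((1 - k) * v) hvR hwR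
            (by rw [NNReal.coe_add]) hscoe _ hkcoe
        simp_rw [hpt]
        simp_rw [ENNReal.ofReal_mul (gaussianPDFReal_nonneg μ v x)]
        rw [lintegral_const_mul _ ((measurable_gaussianPDFReal x w).ennreal_ofReal)]
        rw [lintegral_gaussianPDFReal_eq_one x hw.ne', mul_one]
        rfl
      · simp [Set.indicator_of_notMem hx]
    simp_rw [hinner]
    rw [lintegral_indicator hA, ← gaussianReal_apply μ hv.ne' A]
  · apply Measurable.aemeasurable
    have huncurry : (Function.uncurry fun y x => A.indicator (fun x =>
        gaussianPDF μ (v + w) y * gaussianPDF (μ + (k : ℝ) * (y - μ)) ((1 - k) * v) x) x) =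
        (Prod.snd ⁻¹' A).indicator (fun p : ℝ × ℝ =>
          gaussianPDF μ (v + w) p.1 * gaussianPDF (μ + (k : ℝ) * (p.1 - μ)) ((1 - k) * v) p.2) := by
      funext p
      by_cases hx : p.2 ∈ A <;> simp [Function.uncurry, Set.indicator_apply, hx]
    rw [huncurry]
    exact (((measurable_gaussianPDF μ (v + w)).comp measurable_fst).mul hjm).indicator
      (measurable_snd hA)
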